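/- arXiv:1902.02893 — 3 statements merged into one kernel-verified Lean document; each statement's English description precedes it below -/
import Mathlib

section
/- If a binary relation ≻ on lotteries over prospects satisfies asymmetry, negative transitivity, independence, and continuity, then there exists a utility function U on prospects such that for all lotteries p̃, q̃ with finite support, p̃ ≻ q̃ if and only if the expected value of U under p̃ exceeds that under q̃; moreover U is unique up to positive affine transformation. -/
/-- A lottery on a set of prospects `P`: a finitely supported probability
distribution on `P`. -/
structure Lottery (P : Type*) where
  prob : P → ℝ
  nonneg : ∀ x, 0 ≤ prob x
  finite_support : (Function.support prob).Finite
  total : ∑ᶠ x, prob x = 1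

/-- `IsMix m α p q` says the lottery `m` is the mixture `α p + (1-α) q`. -/
def IsMix {P : Type*} (m : Lottery P) (α : ℝ) (p q : Lottery P) : Prop :=
  ∀ x, m.prob x = α * p.prob x + (1 - α) * q.prob x

/-- Expected utility of a lottery with respect to a utility function `U`. -/
noncomputable def expUtility {P : Type*} (U : P → ℝ) (p : Lottery P) : ℝ :=
  ∑ᶠ x, p.prob x * U x

/-!
Fix `b ≻ w`. Independence makes `t ↦ t b + (1 - t) w` strictly increasing, and continuity makes
every `q` with `b ≽ q ≽ w` indifferent to exactly one point of this segment. Its weight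
`calib pref b w q` represents `≻` on the frame `[w, b]`, and since indifferent lotteries may be
substituted inside mixtures it is also affine there. Calibrations in nested frames are positive
affine images of each other, so normalising at a fixed pair `L1 ≻ L0` gives a single
mixture-affine utility `u` on all lotteries, and the same argument shows that every
mixture-affine representation is a positive affine transform of `u`. As every lottery is built
from Dirac lotteries by mixing, `u` is the expectation of `x ↦ u (dirac x)`.
-/

open Set Function Lottery

section Preference

variable {α : Type*} {r : α → α → Prop} {a b c a' b' : α}

structure IsPreference (r : α → α → Prop) : Prop where
  asymm : ∀ a b, r a b → ¬ r b a
  negTrans : ∀ a b c, ¬ r a b → ¬ r b c → ¬ r a c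

def Indiff (r : α → α → Prop) (a b : α) : Prop := ¬ r a b ∧ ¬ r b a

theorem Indiff.symm (h : Indiff r a b) : Indiff r b a := And.symm h

def prefIcc (r : α → α → Prop) (a b : α) : Set α := {x | ¬ r a x ∧ ¬ r x b}

open Classical in
noncomputable def prefMax (r : α → α → Prop) (a b : α) : α := if r b a then b else a

noncomputable abbrev prefMin (r : α → α → Prop) (a b : α) : α := prefMax (flip r) a b

def RepresentsOn (r : α → α → Prop) (s : Set α) (v : α → ℝ) : Prop :=
  ∀ x ∈ s, ∀ y ∈ s, r x y ↔ v y < v x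

theorem RepresentsOn.mono {s t : Set α} {v : α → ℝ} (hv : RepresentsOn r t v)
    (hst : s ⊆ t) : RepresentsOn r s v :=
  fun x hx y hy => hv x (hst hx) y (hst hy)

theorem RepresentsOn.eq_of_indiff {s : Set α} {v : α → ℝ} (hv : RepresentsOn r s v) {x y : α}
    (hx : x ∈ s) (hy : y ∈ s) (hxy : Indiff r x y) : v x = v y :=
  le_antisymm (not_lt.1 fun h => hxy.1 ((hv x hx y hy).2 h))
    (not_lt.1 fun h => hxy.2 ((hv y hy x hx).2 h))

theorem not_pref_prefMax (ha : ¬ r a c) (hb : ¬ r b c) : ¬ r (prefMax r a b) c := by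
  unfold prefMax; split_ifs <;> assumption

namespace IsPreference

variable (h : IsPreference r)
include h

theorem irrefl (a : α) : ¬ r a a := fun h' => h.asymm a a h' h'

theorem dual : IsPreference (flip r) :=
  ⟨fun a b hab => h.asymm b a hab, fun a b c hab hbc => h.negTrans c b a hbc hab⟩

theorem pref_of_not_pref_of_pref (hab : ¬ r b a) (hbc : r b c) : r a c :=
  of_not_not fun hac => h.negTrans b a c hab hac hbc

theorem pref_of_pref_of_not_pref (hab : r a b) (hbc : ¬ r c b) : r a c :=
  of_not_not fun hac => h.negTrans a c b hac hbc hab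

theorem trans (hab : r a b) (hbc : r b c) : r a c :=
  h.pref_of_pref_of_not_pref hab (h.asymm b c hbc)

theorem indiff_trans (hab : Indiff r a b) (hbc : Indiff r b c) : Indiff r a c :=
  ⟨h.negTrans a b c hab.1 hbc.1, h.negTrans c b a hbc.2 hab.2⟩

theorem pref_congr (ha : Indiff r a a') (hb : Indiff r b b') : r a b ↔ r a' b' :=
  ⟨fun hab => h.pref_of_not_pref_of_pref ha.1 (h.pref_of_pref_of_not_pref hab hb.2),
    fun hab => h.pref_of_not_pref_of_pref ha.2 (h.pref_of_pref_of_not_pref hab hb.1)⟩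

theorem prefIcc_subset_prefIcc (ha : ¬ r a a') (hb : ¬ r b' b) :
    prefIcc r a' b' ⊆ prefIcc r a b :=
  fun _ hx => ⟨h.negTrans _ _ _ ha hx.1, h.negTrans _ _ _ hx.2 hb⟩

theorem not_pref_prefMax_left : ¬ r a (prefMax r a b) := by
  unfold prefMax; split_ifs with hba
  · exact h.asymm b a hba
  · exact h.irrefl a

theorem not_pref_prefMax_right : ¬ r b (prefMax r a b) := by
  unfold prefMax; split_ifs with hba
  · exact h.irrefl b
  · exact hba

theorem pref_of_mem_prefIcc (ha' : a' ∈ prefIcc r a b) (hb' : b' ∈ prefIcc r a b)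
    (hba : r b' a') : r b a :=
  h.pref_of_not_pref_of_pref hb'.2 (h.pref_of_pref_of_not_pref hba ha'.1)

theorem left_mem_prefIcc (hab : ¬ r a b) : a ∈ prefIcc r a b := ⟨h.irrefl a, hab⟩

theorem right_mem_prefIcc (hab : ¬ r a b) : b ∈ prefIcc r a b := ⟨hab, h.irrefl b⟩

theorem mem_prefIcc_prefMin_prefMax : c ∈ prefIcc r (prefMin r a c) (prefMax r b c) :=
  ⟨h.dual.not_pref_prefMax_right, h.not_pref_prefMax_right⟩

theorem prefIcc_subset_prefIcc_prefMin_prefMax :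
    prefIcc r a b ⊆ prefIcc r (prefMin r a c) (prefMax r b c) :=
  h.prefIcc_subset_prefIcc h.dual.not_pref_prefMax_left h.not_pref_prefMax_left

theorem endpoints_mem_prefIcc_prefMin_prefMax (hab : ¬ r a b) :
    a ∈ prefIcc r (prefMin r a c) (prefMax r b c) ∧
      b ∈ prefIcc r (prefMin r a c) (prefMax r b c) :=
  ⟨h.prefIcc_subset_prefIcc_prefMin_prefMax (h.left_mem_prefIcc hab),
    h.prefIcc_subset_prefIcc_prefMin_prefMax (h.right_mem_prefIcc hab)⟩

end IsPreference

end Preference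

section

variable {P : Type*}

namespace Lottery

theorem ext {p q : Lottery P} (h : p.prob = q.prob) : p = q := by
  cases p; cases q; congr

theorem hasFiniteSupport (p : Lottery P) : p.prob.HasFiniteSupport := p.finite_support

/-- Outside `t ∈ [0, 1]` this is the junk value `p`. -/
noncomputable def mix (t : ℝ) (p q : Lottery P) : Lottery P :=
  if ht : t ∈ Icc (0 : ℝ) 1 then
    { prob := fun x => t * p.prob x + (1 - t) * q.prob x
      nonneg := fun x => add_nonneg (mul_nonneg ht.1 (p.nonneg x))
        (mul_nonneg (sub_nonneg.2 ht.2) (q.nonneg x))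
      finite_support :=
        ((p.hasFiniteSupport.fun_mul_right _).add (q.hasFiniteSupport.fun_mul_right _) :)
      total := by
        rw [finsum_add_distrib (p.hasFiniteSupport.fun_mul_right _)
            (q.hasFiniteSupport.fun_mul_right _), ← mul_finsum, ← mul_finsum, p.total, q.total]
        ring }
  else p

variable {s t : ℝ} {p q : Lottery P}

theorem prob_mix (ht : t ∈ Icc (0 : ℝ) 1) (p q : Lottery P) (x : P) :
    (mix t p q).prob x = t * p.prob x + (1 - t) * q.prob x := by
  rw [mix, dif_pos ht]

theorem isMix_mix (ht : t ∈ Icc (0 : ℝ) 1) (p q : Lottery P) : IsMix (mix t p q) t p q :=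
  prob_mix ht p q

theorem _root_.IsMix.eq_mix {m : Lottery P} (h : IsMix m t p q) (ht : t ∈ Icc (0 : ℝ) 1) :
    m = mix t p q :=
  ext <| funext fun x => by rw [h x, prob_mix ht]

theorem mix_zero (p q : Lottery P) : mix 0 p q = q :=
  ext <| funext fun x => by rw [prob_mix (by simp)]; ring

theorem mix_one (p q : Lottery P) : mix 1 p q = p :=
  ext <| funext fun x => by rw [prob_mix (by simp)]; ring

theorem mix_self (ht : t ∈ Icc (0 : ℝ) 1) (p : Lottery P) : mix t p p = p :=
  ext <| funext fun x => by rw [prob_mix ht]; ring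

theorem mix_comm (ht : t ∈ Icc (0 : ℝ) 1) (p q : Lottery P) : mix t p q = mix (1 - t) q p :=
  ext <| funext fun x => by
    rw [prob_mix ht, prob_mix (Icc.one_sub_mem ht)]; ring

theorem mix_mix_mix {r : ℝ} (hr : r ∈ Icc (0 : ℝ) 1) (hs : s ∈ Icc (0 : ℝ) 1)
    (ht : t ∈ Icc (0 : ℝ) 1) (p q : Lottery P) :
    mix r (mix s p q) (mix t p q) = mix (r * s + (1 - r) * t) p q := by
  have hrst : r * s + (1 - r) * t ∈ Icc (0 : ℝ) 1 := by
    constructor <;> nlinarith [hr.1, hr.2, hs.1, hs.2, ht.1, ht.2]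
  exact ext <| funext fun x => by rw [prob_mix hr, prob_mix hs, prob_mix ht, prob_mix hrst]; ring

theorem mix_mix_right (hs : s ∈ Icc (0 : ℝ) 1) (ht : t ∈ Icc (0 : ℝ) 1) (p q : Lottery P) :
    mix s (mix t p q) q = mix (s * t) p q := by
  simpa [mix_zero] using mix_mix_mix hs ht (left_mem_Icc.2 zero_le_one) p q

theorem mix_mix_left (hs : s ∈ Icc (0 : ℝ) 1) (ht : t ∈ Icc (0 : ℝ) 1) (p q : Lottery P) :
    mix s p (mix t p q) = mix (s + (1 - s) * t) p q := by
  simpa [mix_one] using mix_mix_mix hs (right_mem_Icc.2 zero_le_one) ht p q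

open Classical in
noncomputable def dirac (x : P) : Lottery P where
  prob := Pi.single x 1
  nonneg y := by by_cases h : y = x <;> simp [h]
  finite_support := (finite_singleton x).subset (Pi.support_single_subset)
  total := by rw [finsum_eq_single _ x fun y hy => Pi.single_eq_of_ne hy _, Pi.single_eq_same]

theorem prob_dirac [DecidableEq P] (x y : P) : (dirac x).prob y = if y = x then 1 else 0 := by
  simp only [dirac, Pi.single_apply]; congr

theorem support_nonempty (p : Lottery P) : (support p.prob).Nonempty := by
  rw [nonempty_iff_ne_empty, Ne, support_eq_empty_iff]
  rintro h
  simpa [h] using p.total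

theorem prob_le_one (p : Lottery P) (x : P) : p.prob x ≤ 1 :=
  p.total ▸ single_le_finsum x p.hasFiniteSupport p.nonneg

noncomputable def residual (p : Lottery P) (x : P) : P → ℝ :=
  fun y => p.prob y - p.prob x * (dirac x).prob y

theorem residual_nonneg (p : Lottery P) (x y : P) : 0 ≤ p.residual x y := by
  classical
  by_cases h : y = x
  · simp [residual, prob_dirac, h]
  · simpa [residual, prob_dirac, h] using p.nonneg y

theorem residual_self (p : Lottery P) (x : P) : p.residual x x = 0 := by
  classical
  simp [residual, prob_dirac]

theorem hasFiniteSupport_residual (p : Lottery P) (x : P) : (p.residual x).HasFiniteSupport :=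
  p.hasFiniteSupport.sub ((dirac x).hasFiniteSupport.fun_mul_right _)

theorem finsum_residual (p : Lottery P) (x : P) : ∑ᶠ y, p.residual x y = 1 - p.prob x := by
  unfold residual
  rw [finsum_sub_distrib p.hasFiniteSupport ((dirac x).hasFiniteSupport.fun_mul_right _),
    ← mul_finsum, p.total, (dirac x).total, mul_one]

theorem eq_dirac_of_prob_eq_one {x : P} (h : p.prob x = 1) : p = dirac x := by
  refine ext <| funext fun y => ?_
  have hy := single_le_finsum y (p.hasFiniteSupport_residual x) (p.residual_nonneg x)
  rw [finsum_residual, h, sub_self] at hy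
  have := (p.residual_nonneg x y).antisymm' hy
  rw [residual, h, one_mul, sub_eq_zero] at this
  exact this

theorem exists_eq_mix_dirac {x : P} (h : p.prob x < 1) : ∃ q : Lottery P,
    q.prob x = 0 ∧ support q.prob ⊆ support p.prob ∧ p = mix (p.prob x) (dirac x) q := by
  have hpos : 0 < 1 - p.prob x := sub_pos.2 h
  let q : Lottery P :=
    { prob := fun y => (1 - p.prob x)⁻¹ * p.residual x y
      nonneg := fun y => mul_nonneg (inv_nonneg.2 hpos.le) (p.residual_nonneg x y)
      finite_support := (p.hasFiniteSupport_residual x).fun_mul_right _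
      total := by rw [← mul_finsum, finsum_residual, inv_mul_cancel₀ hpos.ne'] }
  refine ⟨q, by simp [q, residual_self], fun y hy => ?_, ext <| funext fun y => ?_⟩
  · classical
    by_cases hyx : y = x
    · simp [q, hyx, residual_self] at hy
    · simpa [q, residual, prob_dirac, hyx, hpos.ne'] using hy
  · rw [prob_mix ⟨p.nonneg x, h.le⟩]
    simp only [q, residual]
    field_simp
    ring

@[elab_as_elim]
theorem induction_on {motive : Lottery P → Prop} (p : Lottery P)
    (dirac : ∀ x, motive (Lottery.dirac x))
    (mix : ∀ t ∈ Icc (0 : ℝ) 1, ∀ x q, motive q →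
      motive (Lottery.mix t (Lottery.dirac x) q)) :
    motive p := by
  induction hn : (support p.prob).ncard using Nat.strong_induction_on generalizing p with
  | _ n ih =>
  obtain ⟨x, hx⟩ := p.support_nonempty
  rcases (p.prob_le_one x).eq_or_lt with h | h
  · exact p.eq_dirac_of_prob_eq_one h ▸ dirac x
  obtain ⟨q, hqx, hqp, hpq⟩ := p.exists_eq_mix_dirac h
  rw [hpq]
  refine mix _ ⟨p.nonneg x, h.le⟩ x q (ih _ ?_ q rfl)
  rw [← hn]
  exact ncard_lt_ncard ⟨hqp, fun hpq' => hpq' hx hqx⟩ p.finite_support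

end Lottery

structure IsIndepPreference (pref : Lottery P → Lottery P → Prop) : Prop
    extends IsPreference pref where
  indep : ∀ t ∈ Ioc (0 : ℝ) 1, ∀ p q r, pref p q → pref (mix t p r) (mix t q r)

structure IsVNMPreference (pref : Lottery P → Lottery P → Prop) : Prop
    extends IsIndepPreference pref where
  cont : ∀ p q r, pref p q → pref q r →
    ∃ s ∈ Ioo (0 : ℝ) 1, ∃ t ∈ Ioo (0 : ℝ) 1, pref (mix s p r) q ∧ pref q (mix t p r)

/-- The calibration of `q` against `b ≻ w`: the weight `t` with `q ~ t b + (1 - t) w`. -/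
noncomputable def calib (pref : Lottery P → Lottery P → Prop) (b w q : Lottery P) : ℝ :=
  sSup {t ∈ Icc (0 : ℝ) 1 | ¬ pref (mix t b w) q}

noncomputable def normCalib (pref : Lottery P → Lottery P → Prop) (L0 L1 b w x : Lottery P) :
    ℝ :=
  (calib pref b w x - calib pref b w L0) / (calib pref b w L1 - calib pref b w L0)

/-- Read off in the smallest frame containing `L0`, `L1` and `x`; any larger frame gives the same
value (`IsVNMPreference.vnmUtility_eq`). -/
noncomputable def vnmUtility (pref : Lottery P → Lottery P → Prop) (L0 L1 x : Lottery P) :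
    ℝ :=
  normCalib pref L0 L1 (prefMax pref L1 x) (prefMin pref L0 x) x

def IsMixAffine (v : Lottery P → ℝ) : Prop :=
  ∀ t ∈ Icc (0 : ℝ) 1, ∀ p q, v (mix t p q) = t * v p + (1 - t) * v q

variable {pref : Lottery P → Lottery P → Prop} {p q r p' q' b w m : Lottery P} {s t : ℝ}

namespace IsIndepPreference

variable (h : IsIndepPreference pref)
include h

theorem dual : IsIndepPreference (flip pref) :=
  ⟨h.toIsPreference.dual, fun t ht p q r hpq => h.indep t ht q p r hpq⟩

theorem pref_mix_right (hpq : pref p q) (ht : t ∈ Ioc (0 : ℝ) 1) : pref (mix t p q) q := by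
  simpa [mix_self (Ioc_subset_Icc_self ht)] using h.indep t ht p q q hpq

theorem pref_mix_left (hpq : pref p q) (ht : t ∈ Ico (0 : ℝ) 1) : pref p (mix t p q) := by
  have h1t : 1 - t ∈ Ioc (0 : ℝ) 1 := ⟨sub_pos.2 ht.2, sub_le_self _ ht.1⟩
  have := h.dual.pref_mix_right hpq h1t
  rwa [← mix_comm (Ico_subset_Icc_self ht)] at this

theorem mix_pref_mix (hpq : pref p q) (hs : 0 ≤ s) (hst : s < t) (ht : t ≤ 1) :
    pref (mix t p q) (mix s p q) := by
  have ht0 : 0 < t := hs.trans_lt hst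
  have hmq : pref (mix t p q) q := h.pref_mix_right hpq ⟨ht0, ht⟩
  have hst' : s / t ∈ Ico (0 : ℝ) 1 := ⟨div_nonneg hs ht0.le, (div_lt_one ht0).2 hst⟩
  simpa [mix_mix_right (Ico_subset_Icc_self hst') ⟨ht0.le, ht⟩, div_mul_cancel₀ s ht0.ne']
    using h.pref_mix_left hmq hst'

theorem mix_pref_mix_iff (hpq : pref p q) (hs : s ∈ Icc (0 : ℝ) 1)
    (ht : t ∈ Icc (0 : ℝ) 1) : pref (mix t p q) (mix s p q) ↔ s < t := by
  refine ⟨fun hts => ?_, fun hst => h.mix_pref_mix hpq hs.1 hst ht.2⟩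
  by_contra hst
  rcases (not_lt.1 hst).eq_or_lt with rfl | hts'
  · exact h.irrefl _ hts
  · exact h.asymm _ _ hts (h.mix_pref_mix hpq ht.1 hts' hs.2)

theorem not_pref_mix (hp : ¬ pref p b) (hq : ¬ pref q b) (ht : t ∈ Icc (0 : ℝ) 1) :
    ¬ pref (mix t p q) b := by
  rcases ht.1.eq_or_lt with rfl | ht0
  · rwa [mix_zero]
  rcases ht.2.eq_or_lt with rfl | ht1
  · rwa [mix_one]
  intro hmb
  -- `mix t p q` would be strictly better than both `p` and `q`, hence than `mix t (mix t p q) q`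
  have hmp := h.pref_of_pref_of_not_pref hmb hp
  have hmq := h.pref_of_pref_of_not_pref hmb hq
  have h1 := h.indep t ⟨ht0, ht1.le⟩ _ _ q hmp
  exact h.asymm _ _ h1 (h.pref_mix_left hmq ⟨ht0.le, ht1⟩)

theorem not_pref_of_not_pref_mix (hp : ¬ pref b p) (hq : ¬ pref b q)
    (ht : t ∈ Icc (0 : ℝ) 1) : ¬ pref b (mix t p q) :=
  h.dual.not_pref_mix hp hq ht

theorem mix_mem_prefIcc (hp : p ∈ prefIcc pref w b) (hq : q ∈ prefIcc pref w b)
    (ht : t ∈ Icc (0 : ℝ) 1) : mix t p q ∈ prefIcc pref w b :=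
  ⟨h.not_pref_of_not_pref_mix hp.1 hq.1 ht, h.not_pref_mix hp.2 hq.2 ht⟩

end IsIndepPreference

namespace IsVNMPreference

variable (h : IsVNMPreference pref) {L0 L1 x : Lottery P} {v : Lottery P → ℝ}
include h

theorem dual : IsVNMPreference (flip pref) := by
  refine ⟨h.toIsIndepPreference.dual, fun p q r hpq hqr => ?_⟩
  obtain ⟨s, hs, t, ht, hsq, hqt⟩ := h.cont r q p hqr hpq
  have h1 : ∀ {u : ℝ}, u ∈ Ioo (0 : ℝ) 1 → 1 - u ∈ Ioo (0 : ℝ) 1 :=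
    fun hu => ⟨sub_pos.2 hu.2, sub_lt_self _ hu.1⟩
  refine ⟨1 - t, h1 ht, 1 - s, h1 hs, ?_, ?_⟩
  · rwa [mix_comm (Ioo_subset_Icc_self ht)] at hqt
  · rwa [mix_comm (Ioo_subset_Icc_self hs)] at hsq

theorem exists_pref_mix (hqm : pref q m) (hqb : ¬ pref q b) :
    ∃ s ∈ Ioo (0 : ℝ) 1, pref q (mix s b m) := by
  by_cases hbq : pref b q
  · obtain ⟨-, -, s, hs, -, hqs⟩ := h.cont b q m hbq hqm
    exact ⟨s, hs, hqs⟩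
  · have hbm := h.pref_of_not_pref_of_pref hqb hqm
    exact ⟨1 / 2, by norm_num,
      h.pref_of_not_pref_of_pref hbq (h.pref_mix_left hbm (by norm_num))⟩

theorem exists_mix_pref (hmq : pref m q) (hwq : ¬ pref w q) :
    ∃ s ∈ Ioo (0 : ℝ) 1, pref (mix s w m) q :=
  h.dual.exists_pref_mix hmq hwq

theorem not_pref_mix_of_indiff_of_pref (hpq : Indiff pref p q) (hpr : pref p r)
    (ht : t ∈ Ioo (0 : ℝ) 1) : ¬ pref (mix t q r) (mix t p r) := by
  intro hqp
  have hqr := h.pref_of_not_pref_of_pref hpq.1 hpr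
  obtain ⟨s, hs, -, -, hsp, -⟩ :=
    h.cont _ _ r hqp (h.pref_mix_right hpr (Ioo_subset_Ioc_self ht))
  rw [mix_mix_right (Ioo_subset_Icc_self hs) (Ioo_subset_Icc_self ht)] at hsp
  have hps := h.pref_of_not_pref_of_pref hpq.2 (h.pref_mix_left hqr (Ioo_subset_Ico_self hs))
  have hps' := h.indep t (Ioo_subset_Ioc_self ht) _ _ r hps
  rw [mix_mix_right (Ioo_subset_Icc_self ht) (Ioo_subset_Icc_self hs), mul_comm] at hps'
  exact h.asymm _ _ hsp hps'

theorem not_pref_mix_of_indiff (hpq : Indiff pref p q) (ht : t ∈ Icc (0 : ℝ) 1) :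
    ¬ pref (mix t q r) (mix t p r) := by
  rcases ht.1.eq_or_lt with rfl | ht0
  · simpa [mix_zero] using h.irrefl r
  rcases ht.2.eq_or_lt with rfl | ht1
  · simpa [mix_one] using hpq.2
  by_cases hpr : pref p r
  · exact h.not_pref_mix_of_indiff_of_pref hpq hpr ⟨ht0, ht1⟩
  by_cases hrp : pref r p
  · exact h.dual.not_pref_mix_of_indiff_of_pref hpq
      (h.pref_of_pref_of_not_pref hrp hpq.2) ⟨ht0, ht1⟩
  -- all three lotteries are indifferent, and so are their mixtures
  have hqr : Indiff pref q r := h.indiff_trans hpq.symm ⟨hpr, hrp⟩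
  have hmix : ∀ {x}, Indiff pref x r → Indiff pref (mix t x r) x := fun hx =>
    ⟨h.not_pref_mix (h.irrefl _) hx.2 ht, h.not_pref_of_not_pref_mix (h.irrefl _) hx.1 ht⟩
  exact (h.pref_congr (hmix hqr) (hmix ⟨hpr, hrp⟩)).not.2 hpq.2

theorem indiff_mix (hp : Indiff pref p p') (hq : Indiff pref q q') (ht : t ∈ Icc (0 : ℝ) 1) :
    Indiff pref (mix t p q) (mix t p' q') := by
  have hleft : Indiff pref (mix t p q) (mix t p' q) :=
    ⟨h.not_pref_mix_of_indiff hp.symm ht, h.not_pref_mix_of_indiff hp ht⟩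
  have hright : Indiff pref (mix (1 - t) q p') (mix (1 - t) q' p') :=
    ⟨h.not_pref_mix_of_indiff hq.symm (Icc.one_sub_mem ht),
      h.not_pref_mix_of_indiff hq (Icc.one_sub_mem ht)⟩
  rw [← mix_comm ht, ← mix_comm ht] at hright
  exact h.indiff_trans hleft hright

theorem calib_mem_Icc_and_indiff (hbw : pref b w) (hq : q ∈ prefIcc pref w b) :
    calib pref b w q ∈ Icc (0 : ℝ) 1 ∧ Indiff pref q (mix (calib pref b w q) b w) := by
  set S := {t ∈ Icc (0 : ℝ) 1 | ¬ pref (mix t b w) q}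
  have h0 : (0 : ℝ) ∈ S := ⟨left_mem_Icc.2 zero_le_one, by rw [mix_zero]; exact hq.1⟩
  have hbdd : BddAbove S := ⟨1, fun x hx => hx.1.2⟩
  set L := calib pref b w q
  have hL : L ∈ Icc (0 : ℝ) 1 := ⟨le_csSup hbdd h0, csSup_le ⟨0, h0⟩ fun x hx => hx.1.2⟩
  refine ⟨hL, fun hqL => ?_, fun hLq => ?_⟩
  · have hL1 : L < 1 := hL.2.lt_of_ne fun hL1 => hq.2 (by rwa [hL1, mix_one] at hqL)
    obtain ⟨s, hs, hqs⟩ := h.exists_pref_mix hqL hq.2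
    rw [mix_mix_left (Ioo_subset_Icc_self hs) hL] at hqs
    have hmem : s + (1 - s) * L ∈ S :=
      ⟨⟨by nlinarith [hs.1, hs.2, hL.1], by nlinarith [hs.1, hs.2, hL.2]⟩, h.asymm _ _ hqs⟩
    have hle : s + (1 - s) * L ≤ L := le_csSup hbdd hmem
    nlinarith [mul_pos hs.1 (sub_pos.2 hL1)]
  · have hL0 : 0 < L := hL.1.lt_of_ne' fun hL0 => hq.1 (by rwa [hL0, mix_zero] at hLq)
    obtain ⟨s, hs, hsq⟩ := h.exists_mix_pref hLq hq.1
    rw [mix_comm (Ioo_subset_Icc_self hs),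
      mix_mix_right (Icc.one_sub_mem (Ioo_subset_Icc_self hs)) hL] at hsq
    obtain ⟨x, hxS, hx⟩ :=
      exists_lt_of_lt_csSup ⟨0, h0⟩ (by nlinarith [hs.1] : (1 - s) * L < L)
    exact hxS.2 (h.trans (h.mix_pref_mix hbw (by nlinarith [hs.2]) hx hxS.1.2) hsq)

theorem calib_eq_of_indiff (hbw : pref b w) (hq : q ∈ prefIcc pref w b)
    (ht : t ∈ Icc (0 : ℝ) 1) (hqt : Indiff pref q (mix t b w)) : calib pref b w q = t := by
  obtain ⟨hc, hqc⟩ := h.calib_mem_Icc_and_indiff hbw hq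
  have hct := h.indiff_trans hqc.symm hqt
  exact le_antisymm (not_lt.1 fun hlt => hct.1 ((h.mix_pref_mix_iff hbw ht hc).2 hlt))
    (not_lt.1 fun hlt => hct.2 ((h.mix_pref_mix_iff hbw hc ht).2 hlt))

theorem representsOn_calib (hbw : pref b w) :
    RepresentsOn pref (prefIcc pref w b) (calib pref b w) := by
  intro q hq r hr
  obtain ⟨hcq, hq'⟩ := h.calib_mem_Icc_and_indiff hbw hq
  obtain ⟨hcr, hr'⟩ := h.calib_mem_Icc_and_indiff hbw hr
  rw [h.pref_congr hq' hr', h.mix_pref_mix_iff hbw hcr hcq]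

theorem calib_mix (hbw : pref b w) (hq : q ∈ prefIcc pref w b) (hr : r ∈ prefIcc pref w b)
    (ht : t ∈ Icc (0 : ℝ) 1) :
    calib pref b w (mix t q r) = t * calib pref b w q + (1 - t) * calib pref b w r := by
  obtain ⟨hcq, hq'⟩ := h.calib_mem_Icc_and_indiff hbw hq
  obtain ⟨hcr, hr'⟩ := h.calib_mem_Icc_and_indiff hbw hr
  have hmix := h.indiff_mix hq' hr' ht
  rw [mix_mix_mix ht hcq hcr] at hmix
  exact h.calib_eq_of_indiff hbw (h.mix_mem_prefIcc hq hr ht)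
    ⟨by nlinarith [ht.1, ht.2, hcq.1, hcr.1], by nlinarith [ht.1, ht.2, hcq.2, hcr.2]⟩ hmix

theorem eq_add_calib_mul (hbw : pref b w) (hv : RepresentsOn pref (prefIcc pref w b) v)
    (hv' : ∀ t ∈ Icc (0 : ℝ) 1, v (mix t b w) = t * v b + (1 - t) * v w)
    (hx : x ∈ prefIcc pref w b) : v x = v w + calib pref b w x * (v b - v w) := by
  obtain ⟨hc, hxc⟩ := h.calib_mem_Icc_and_indiff hbw hx
  have hb := h.right_mem_prefIcc (h.asymm _ _ hbw)
  have hw := h.left_mem_prefIcc (h.asymm _ _ hbw)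
  rw [hv.eq_of_indiff hx (h.mix_mem_prefIcc hb hw hc) hxc, hv' _ hc]
  ring

theorem sub_eq_normCalib_mul (h10 : pref L1 L0) (hL0 : L0 ∈ prefIcc pref w b)
    (hL1 : L1 ∈ prefIcc pref w b) (hv : RepresentsOn pref (prefIcc pref w b) v)
    (hv' : ∀ t ∈ Icc (0 : ℝ) 1, v (mix t b w) = t * v b + (1 - t) * v w)
    (hx : x ∈ prefIcc pref w b) : v x - v L0 = normCalib pref L0 L1 b w x * (v L1 - v L0) := by
  have hbw := h.pref_of_mem_prefIcc hL0 hL1 h10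
  have hc := (h.representsOn_calib hbw L1 hL1 L0 hL0).1 h10
  rw [normCalib, h.eq_add_calib_mul hbw hv hv' hx, h.eq_add_calib_mul hbw hv hv' hL0,
    h.eq_add_calib_mul hbw hv hv' hL1]
  field_simp [(sub_pos.2 hc).ne']
  ring

theorem normCalib_eq_of_subset {b' w' : Lottery P} (h10 : pref L1 L0)
    (hL0 : L0 ∈ prefIcc pref w' b') (hL1 : L1 ∈ prefIcc pref w' b')
    (hx : x ∈ prefIcc pref w' b')
    (hw : ¬ pref w w') (hb : ¬ pref b' b) :
    normCalib pref L0 L1 b w x = normCalib pref L0 L1 b' w' x := by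
  have hsub := h.prefIcc_subset_prefIcc hw hb
  have hbw := h.pref_of_mem_prefIcc (hsub hL0) (hsub hL1) h10
  have hb'w' := h.pref_of_mem_prefIcc hL0 hL1 h10
  have hc := (h.representsOn_calib hbw L1 (hsub hL1) L0 (hsub hL0)).1 h10
  -- the outer calibration is itself an affine representation on the inner frame
  have key := h.sub_eq_normCalib_mul h10 hL0 hL1 ((h.representsOn_calib hbw).mono hsub)
    (fun t ht => h.calib_mix hbw (hsub (h.right_mem_prefIcc (h.asymm _ _ hb'w')))
      (hsub (h.left_mem_prefIcc (h.asymm _ _ hb'w'))) ht) hx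
  rw [normCalib, key, mul_div_cancel_right₀ _ (sub_pos.2 hc).ne']

theorem representsOn_normCalib (h10 : pref L1 L0) (hL0 : L0 ∈ prefIcc pref w b)
    (hL1 : L1 ∈ prefIcc pref w b) :
    RepresentsOn pref (prefIcc pref w b) (normCalib pref L0 L1 b w) := by
  have hbw := h.pref_of_mem_prefIcc hL0 hL1 h10
  have hc := (h.representsOn_calib hbw L1 hL1 L0 hL0).1 h10
  intro q hq r hr
  rw [h.representsOn_calib hbw q hq r hr, normCalib, normCalib,
    div_lt_div_iff_of_pos_right (sub_pos.2 hc), sub_lt_sub_iff_right]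

theorem normCalib_mix (h10 : pref L1 L0) (hL0 : L0 ∈ prefIcc pref w b)
    (hL1 : L1 ∈ prefIcc pref w b) (hq : q ∈ prefIcc pref w b) (hr : r ∈ prefIcc pref w b)
    (ht : t ∈ Icc (0 : ℝ) 1) : normCalib pref L0 L1 b w (mix t q r) =
      t * normCalib pref L0 L1 b w q + (1 - t) * normCalib pref L0 L1 b w r := by
  simp only [normCalib, h.calib_mix (h.pref_of_mem_prefIcc hL0 hL1 h10) hq hr ht]
  ring

theorem vnmUtility_eq (h10 : pref L1 L0) (hL0 : L0 ∈ prefIcc pref w b)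
    (hL1 : L1 ∈ prefIcc pref w b) (hx : x ∈ prefIcc pref w b) :
    vnmUtility pref L0 L1 x = normCalib pref L0 L1 b w x :=
  (h.normCalib_eq_of_subset h10 (h.endpoints_mem_prefIcc_prefMin_prefMax (h.asymm _ _ h10)).1
    (h.endpoints_mem_prefIcc_prefMin_prefMax (h.asymm _ _ h10)).2 h.mem_prefIcc_prefMin_prefMax
    (not_pref_prefMax (r := flip pref) hL0.1 hx.1) (not_pref_prefMax hL1.2 hx.2)).symm

theorem exists_representsOn_isMixAffine :
    ∃ u, RepresentsOn pref univ u ∧ IsMixAffine u := by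
  by_cases htriv : ∃ L1 L0, pref L1 L0
  swap
  · exact ⟨0, fun p _ q _ => iff_of_false (fun hpq => htriv ⟨p, q, hpq⟩) (lt_irrefl 0),
      fun t _ p q => by simp⟩
  obtain ⟨L1, L0, h10⟩ := htriv
  have frame : ∀ q r, ∃ w b, L0 ∈ prefIcc pref w b ∧ L1 ∈ prefIcc pref w b ∧
      q ∈ prefIcc pref w b ∧ r ∈ prefIcc pref w b := by
    intro q r
    have hsub := h.prefIcc_subset_prefIcc_prefMin_prefMax (c := r)
      (a := prefMin pref L0 q) (b := prefMax pref L1 q)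
    have h01 := h.endpoints_mem_prefIcc_prefMin_prefMax (c := q) (h.asymm _ _ h10)
    exact ⟨_, _, hsub h01.1, hsub h01.2, hsub h.mem_prefIcc_prefMin_prefMax,
      h.mem_prefIcc_prefMin_prefMax⟩
  refine ⟨vnmUtility pref L0 L1, fun q _ r _ => ?_, fun t ht q r => ?_⟩
  · obtain ⟨w, b, h0, h1, hq, hr⟩ := frame q r
    rw [h.vnmUtility_eq h10 h0 h1 hq, h.vnmUtility_eq h10 h0 h1 hr]
    exact h.representsOn_normCalib h10 h0 h1 q hq r hr
  · obtain ⟨w, b, h0, h1, hq, hr⟩ := frame q r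
    rw [h.vnmUtility_eq h10 h0 h1 (h.mix_mem_prefIcc hq hr ht), h.vnmUtility_eq h10 h0 h1 hq,
      h.vnmUtility_eq h10 h0 h1 hr]
    exact h.normCalib_mix h10 h0 h1 hq hr ht

theorem exists_eq_affine {u v : Lottery P → ℝ} (hu : RepresentsOn pref univ u)
    (hu' : IsMixAffine u) (hv : RepresentsOn pref univ v) (hv' : IsMixAffine v) :
    ∃ a b : ℝ, 0 < b ∧ v = fun p => a + b * u p := by
  by_cases htriv : ∃ L1 L0, pref L1 L0
  swap
  · have hconst : ∀ {f}, RepresentsOn pref univ f → ∀ p q, f p = f q := fun hf p q =>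
      hf.eq_of_indiff (mem_univ p) (mem_univ q)
        ⟨fun h' => htriv ⟨p, q, h'⟩, fun h' => htriv ⟨q, p, h'⟩⟩
    rcases isEmpty_or_nonempty (Lottery P) with hE | ⟨⟨p0⟩⟩
    · exact ⟨0, 1, one_pos, funext hE.elim⟩
    · refine ⟨v p0 - u p0, 1, one_pos, funext fun p => ?_⟩
      rw [hconst hv p p0, hconst hu p p0]
      ring
  obtain ⟨L1, L0, h10⟩ := htriv
  have hu0 := sub_pos.2 ((hu L1 (mem_univ _) L0 (mem_univ _)).1 h10)
  have hv0 := sub_pos.2 ((hv L1 (mem_univ _) L0 (mem_univ _)).1 h10)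
  refine ⟨v L0 - (v L1 - v L0) / (u L1 - u L0) * u L0, (v L1 - v L0) / (u L1 - u L0),
    div_pos hv0 hu0, funext fun x => ?_⟩
  obtain ⟨h0, h1⟩ := h.endpoints_mem_prefIcc_prefMin_prefMax (c := x) (h.asymm _ _ h10)
  have hx := h.mem_prefIcc_prefMin_prefMax (a := L0) (b := L1) (c := x)
  have eu := h.sub_eq_normCalib_mul h10 h0 h1 (hu.mono (subset_univ _))
    (fun t ht => hu' t ht _ _) hx
  have ev := h.sub_eq_normCalib_mul h10 h0 h1 (hv.mono (subset_univ _))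
    (fun t ht => hv' t ht _ _) hx
  field_simp
  linear_combination (u L1 - u L0) * ev - (v L1 - v L0) * eu

end IsVNMPreference

theorem expUtility_dirac (U : P → ℝ) (x : P) : expUtility U (dirac x) = U x := by
  classical
  rw [expUtility, finsum_eq_single _ x fun y hy => by simp [prob_dirac, hy]]
  simp [prob_dirac]

theorem expUtility_mix (U : P → ℝ) {t : ℝ} (ht : t ∈ Icc (0 : ℝ) 1) (p q : Lottery P) :
    expUtility U (mix t p q) = t * expUtility U p + (1 - t) * expUtility U q := by
  simp only [expUtility, prob_mix ht, add_mul, mul_assoc]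
  rw [finsum_add_distrib ((p.hasFiniteSupport.fun_mul_left _).fun_mul_right _)
    ((q.hasFiniteSupport.fun_mul_left _).fun_mul_right _), mul_finsum, mul_finsum]

theorem expUtility_affine (U : P → ℝ) (a b : ℝ) (p : Lottery P) :
    expUtility (fun x => a + b * U x) p = a + b * expUtility U p := by
  simp only [expUtility, mul_add, mul_left_comm _ b]
  rw [finsum_add_distrib (p.hasFiniteSupport.fun_mul_left _)
    ((p.hasFiniteSupport.fun_mul_left _).fun_mul_right _), ← finsum_mul, p.total, one_mul,
    mul_finsum]

theorem isMixAffine_expUtility (U : P → ℝ) : IsMixAffine (expUtility U) :=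
  fun _ ht p q => expUtility_mix U ht p q

theorem IsMixAffine.expUtility_eq {u : Lottery P → ℝ} (hu : IsMixAffine u) :
    expUtility (fun x => u (dirac x)) = u := by
  funext p
  induction p using Lottery.induction_on with
  | dirac x => exact expUtility_dirac _ x
  | mix t ht x q ih => rw [expUtility_mix _ ht, expUtility_dirac, ih, hu t ht]

end

/-- The von Neumann–Morgenstern expected utility theorem: a preference relation on
lotteries over prospects satisfying asymmetry, negative transitivity, independence
and continuity is represented by the expectation of a utility function `U` on
prospects, and `U` is unique up to positive affine transformation. -/
theorem vnm_expected_utility {P : Type*} (pref : Lottery P → Lottery P → Prop)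
    (asymm : ∀ p q, pref p q → ¬ pref q p)
    (negTrans : ∀ p q r, ¬ pref p q → ¬ pref q r → ¬ pref p r)
    (indep : ∀ (α : ℝ), 0 < α → α ≤ 1 → ∀ p q r mp mq,
      IsMix mp α p r → IsMix mq α q r → pref p q → pref mp mq)
    (cont : ∀ p q r, pref p q → pref q r →
      ∃ (α β : ℝ) (mα mβ : Lottery P), 0 < α ∧ α < 1 ∧ 0 < β ∧ β < 1 ∧
        IsMix mα α p r ∧ IsMix mβ β p r ∧ pref mα q ∧ pref q mβ) :
    ∃ U : P → ℝ,
      (∀ p q, pref p q ↔ expUtility U p > expUtility U q) ∧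
      (∀ U' : P → ℝ,
        (∀ p q, pref p q ↔ expUtility U' p > expUtility U' q) ↔
        ∃ a b : ℝ, 0 < b ∧ U' = fun x => a + b * U x) := by
  have h : IsVNMPreference pref := by
    refine ⟨⟨⟨asymm, negTrans⟩, fun t ht p q r => indep t ht.1 ht.2 p q r _ _
      (isMix_mix (Ioc_subset_Icc_self ht) p r) (isMix_mix (Ioc_subset_Icc_self ht) q r)⟩,
      fun p q r hpq hqr => ?_⟩
    obtain ⟨s, t, ms, mt, hs0, hs1, ht0, ht1, hms, hmt, hsq, hqt⟩ := cont p q r hpq hqr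
    exact ⟨s, ⟨hs0, hs1⟩, t, ⟨ht0, ht1⟩, hms.eq_mix ⟨hs0.le, hs1.le⟩ ▸ hsq,
      hmt.eq_mix ⟨ht0.le, ht1.le⟩ ▸ hqt⟩
  obtain ⟨u, hu, hu'⟩ := h.exists_representsOn_isMixAffine
  refine ⟨fun x => u (dirac x), fun p q => ?_, fun U' => ⟨fun hU' => ?_, ?_⟩⟩
  · rw [hu'.expUtility_eq]
    exact hu p trivial q trivial
  · obtain ⟨a, b, hb, hv⟩ := h.exists_eq_affine hu hu' (fun p _ q _ => hU' p q)
      (isMixAffine_expUtility U')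
    exact ⟨a, b, hb, funext fun x => by simpa [expUtility_dirac] using congrFun hv (dirac x)⟩
  · rintro ⟨a, b, hb, rfl⟩ p q
    rw [expUtility_affine, expUtility_affine, hu'.expUtility_eq, hu p trivial q trivial]
    simp [hb]
end

section
/- For a finite-state system, suppose the four vector equations hold: u^π = r_Γ + Γ T u^π, u^{a*} = r_Γ + Γ T u*, v^π = r + γ T v^π, u^{a*} = r + γ T v*, where u* = v*, Γ is diagonal positive, T row-stochastic, γ ∈ [0,1), and (I − ΓT) is invertible. Then u^π = u* − (I − ΓT)^{-1}(I − γT)(v* − v^π). -/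
open Matrix

/-- First value-utility identity (Theorem 6): from the four Bellman equations
`u^π = r_Γ + ΓT u^π`, `u^{a*} = r_Γ + ΓT u*`, `v^π = r + γT v^π`,
`u^{a*} = r + γT v*`, with `u* = v*` and `I − ΓT` invertible,
`u^π = u* − (I − ΓT)⁻¹ (I − γT) (v* − v^π)`. -/
theorem utility_value_relation_first {n : ℕ}
    (d : Fin n → ℝ) (Γ T : Matrix (Fin n) (Fin n) ℝ)
    (hΓ : Γ = Matrix.diagonal d) (hd : ∀ i, 0 < d i)
    (hT0 : ∀ i j, 0 ≤ T i j) (hT1 : ∀ i, ∑ j, T i j = 1)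
    (γ : ℝ) (hγ0 : 0 ≤ γ) (hγ1 : γ < 1)
    (upi uastar ustar vpi vstar rΓ r : Fin n → ℝ)
    (h1 : upi = rΓ + (Γ * T).mulVec upi)
    (h2 : uastar = rΓ + (Γ * T).mulVec ustar)
    (h3 : vpi = r + γ • T.mulVec vpi)
    (h4 : uastar = r + γ • T.mulVec vstar)
    (hstar : ustar = vstar)
    (hinv : IsUnit (1 - Γ * T)) :
    upi = ustar - ((1 - Γ * T)⁻¹ * (1 - γ • T)).mulVec (vstar - vpi) := by
  have hdet := (Matrix.isUnit_iff_isUnit_det _).mp hinv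
  have key : (1 - Γ * T).mulVec (ustar - upi) = (1 - γ • T).mulVec (vstar - vpi) := by
    funext i
    have k1 := congrFun h1 i
    have k2 := congrFun h2 i
    have k3 := congrFun h3 i
    have k4 := congrFun h4 i
    have k5 := congrFun hstar i
    simp only [Matrix.sub_mulVec, Matrix.one_mulVec, Matrix.mulVec_sub,
      Matrix.smul_mulVec, Pi.add_apply, Pi.sub_apply, Pi.smul_apply,
      smul_eq_mul] at *
    linarith
  have step : ((1 - Γ * T)⁻¹ * (1 - γ • T)).mulVec (vstar - vpi) = ustar - upi := by
    rw [← Matrix.mulVec_mulVec, ← key, Matrix.mulVec_mulVec,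
      Matrix.nonsing_inv_mul _ hdet, Matrix.one_mulVec]
  rw [step]
  abel
end

section
/- If moreover ε = Γ − γI has all diagonal entries ≤ 0 (i.e., Γ(s,π(s)) ≤ γ for all s) and v* − v^π is entrywise nonnegative, then u^π ≥ v^π entrywise; i.e., the optimizing MDP's value estimates are pessimistic. -/
open Matrix

/-- Pessimism of the optimizing MDP's values: if `Γ(s, π(s)) ≤ γ` for all `s`
(so `ε = Γ − γI` has nonpositive diagonal), `(I − ΓT)⁻¹` and `T` are entrywise
nonnegative, and `v* − v^π ≥ 0` entrywise, then
`u^π = v^π − (I − ΓT)⁻¹ ε T (v* − v^π) ≥ v^π` entrywise. -/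
theorem optimizing_mdp_pessimistic {n : ℕ}
    (d : Fin n → ℝ) (Γ T : Matrix (Fin n) (Fin n) ℝ)
    (hΓ : Γ = Matrix.diagonal d)
    (γ : ℝ) (hdγ : ∀ i, d i ≤ γ)
    (hS : ∀ i j, 0 ≤ (1 - Γ * T)⁻¹ i j)
    (hT : ∀ i j, 0 ≤ T i j)
    (upi vpi vstar : Fin n → ℝ)
    (hgap : ∀ i, 0 ≤ (vstar - vpi) i)
    (hsecond : upi = vpi - ((1 - Γ * T)⁻¹ * (Γ - γ • 1) * T).mulVec (vstar - vpi)) :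
    ∀ i, vpi i ≤ upi i := by
  intro i
  subst hsecond
  have key : ((1 - Γ * T)⁻¹ * (Γ - γ • 1) * T).mulVec (vstar - vpi) i ≤ 0 := by
    have hε : Γ - γ • 1 = Matrix.diagonal (fun k => d k - γ) := by
      ext k l
      by_cases h : k = l <;>
        simp [hΓ, Matrix.diagonal_apply, Matrix.one_apply, h]
    rw [Matrix.mulVec, dotProduct]
    apply Finset.sum_nonpos
    intro j _
    apply mul_nonpos_of_nonpos_of_nonneg _ (hgap j)
    rw [Matrix.mul_apply]
    apply Finset.sum_nonpos
    intro k _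
    rw [hε, Matrix.mul_diagonal]
    apply mul_nonpos_of_nonpos_of_nonneg _ (hT k j)
    exact mul_nonpos_of_nonneg_of_nonpos (hS i k) (by linarith [hdγ k])
  simp only [Pi.sub_apply]
  linarith
end
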